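/- arXiv:2604.11921 — 5 statements merged into one kernel-verified Lean document; each statement's English description precedes it below -/
import Mathlib

section
/- For every $u \geq 0$, $\int_0^1 \frac{1 + (4 - 3s)u}{(1 + su)^3} \cdot \frac{1}{2\sqrt{1-s}}\,ds = 1$. -/
/-!
The integrand is the derivative of `F s = -√(1 - s) / (1 + s u) ^ 2`, so the integral is
`F 1 - F 0 = 0 - (-1) = 1`. The singularity at `s = 1` is harmless: the integrand is nonnegative,
and a nonnegative derivative of a function continuous on `[0, 1]` is integrable.
-/

open Set intervalIntegral

theorem hasDerivAt_neg_sqrt_one_sub_div_sq {u s : ℝ} (hs : s < 1) (hsu : 1 + s * u ≠ 0) :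
    HasDerivAt (fun x => -√(1 - x) / (1 + x * u) ^ 2)
      ((1 + (4 - 3 * s) * u) / (1 + s * u) ^ 3 * (1 / (2 * √(1 - s)))) s := by
  have h1 : 0 < 1 - s := sub_pos.2 hs
  have hsqrt : HasDerivAt (fun x => -√(1 - x)) (1 / (2 * √(1 - s))) s :=
    (((hasDerivAt_id' s).const_sub 1).sqrt h1.ne').neg.congr_deriv (by ring)
  have hden : HasDerivAt (fun x => (1 + x * u) ^ 2) (2 * (1 + s * u) * u) s :=
    ((((hasDerivAt_id' s).mul_const u).const_add 1).pow 2).congr_deriv (by ring)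
  refine (hsqrt.div hden (pow_ne_zero 2 hsu)).congr_deriv ?_
  have hw : √(1 - s) ≠ 0 := (Real.sqrt_pos.2 h1).ne'
  have hsq : √(1 - s) ^ 2 = 1 - s := Real.sq_sqrt h1.le
  field_simp
  linear_combination 4 * u * hsq

theorem stmt_4 (u : ℝ) (hu : 0 ≤ u) :
    ∫ s in (0 : ℝ)..1,
      (1 + (4 - 3 * s) * u) / (1 + s * u) ^ 3 * (1 / (2 * Real.sqrt (1 - s))) = 1 := by
  have hpos : ∀ s ∈ Icc (0 : ℝ) 1, 0 < 1 + s * u := fun s hs => by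
    nlinarith [hs.1]
  have hcont : ContinuousOn (fun x => -√(1 - x) / (1 + x * u) ^ 2) (Icc 0 1) :=
    ContinuousOn.div (by fun_prop) (by fun_prop) fun s hs => pow_ne_zero 2 (hpos s hs).ne'
  have hderiv : ∀ s ∈ Ioo (0 : ℝ) 1, HasDerivAt (fun x => -√(1 - x) / (1 + x * u) ^ 2)
      ((1 + (4 - 3 * s) * u) / (1 + s * u) ^ 3 * (1 / (2 * √(1 - s)))) s :=
    fun s hs => hasDerivAt_neg_sqrt_one_sub_div_sq hs.2 (hpos s (Ioo_subset_Icc_self hs)).ne'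
  have hnonneg : ∀ s ∈ Ioo (0 : ℝ) 1,
      0 ≤ (1 + (4 - 3 * s) * u) / (1 + s * u) ^ 3 * (1 / (2 * √(1 - s))) := fun s hs => by
    have hden := hpos s (Ioo_subset_Icc_self hs)
    have hnum : 0 ≤ 1 + (4 - 3 * s) * u := by nlinarith [hs.2]
    positivity
  rw [integral_eq_sub_of_hasDerivAt_of_le zero_le_one hcont hderiv
    (intervalIntegrable_deriv_of_nonneg (by simpa using hcont) (by simpa using hderiv)
      (by simpa using hnonneg))]
  norm_num
end

section
/- Let $\sigma > 0$ and let $Z$ be a standard Gaussian. Then $\mathbb{E}[\operatorname{sech}^2(\sigma^2 + \sigma Z)] \leq \frac{1}{1 + \sigma^2}$. -/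
/-!
Put `v = σ²`, so that `Y = σ² + σZ` has law `N(v, v)`. Mean equal to variance makes the density
satisfy `p(-y) = e^{-2y} p(y)`; combined with `1 - tanh y = e^{-2y} (1 + tanh y)` this shows that
`y (1 - tanh y)` integrates to zero, i.e. `E[Y tanh Y] = E[Y] = v`. Cauchy–Schwarz then gives
`v² ≤ E[Y²] E[tanh² Y] = (v + v²) E[tanh² Y]`, and `sech² = 1 - tanh²`.
-/

open MeasureTheory ProbabilityTheory Real
open scoped NNReal RealInnerProductSpace

lemma Real.one_sub_tanh_eq_exp_mul_one_add_tanh (y : ℝ) :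
    1 - tanh y = exp (-2 * y) * (1 + tanh y) := by
  have hexp : exp (-2 * y) = exp (-y) * exp (-y) := by rw [← exp_add]; ring_nf
  have hinv : exp y * exp (-y) = 1 := by rw [← exp_add]; simp
  rw [tanh_eq_sinh_div_cosh, sinh_eq, cosh_eq, hexp]
  field_simp
  linear_combination (-2 * exp (-y)) * hinv

lemma Real.inv_cosh_sq_eq_one_sub_tanh_sq (y : ℝ) : (cosh y)⁻¹ ^ 2 = 1 - tanh y ^ 2 := by
  have hc := (cosh_pos y).ne'
  rw [tanh_eq_sinh_div_cosh]
  field_simp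
  linarith [cosh_sq y]

lemma Real.measurable_tanh : Measurable tanh := by
  simp only [funext tanh_eq_sinh_div_cosh]
  fun_prop

lemma memLp_tanh (μ : Measure ℝ) [IsFiniteMeasure μ] (p : ENNReal) : MemLp tanh p μ :=
  MemLp.of_bound measurable_tanh.aestronglyMeasurable 1
    (ae_of_all _ fun y => by simpa using (abs_tanh_lt_one y).le)

lemma sq_integral_mul_le_integral_sq_mul_integral_sq {α : Type*} [MeasurableSpace α]
    {μ : Measure α} {f g : α → ℝ} (hf : MemLp f 2 μ) (hg : MemLp g 2 μ) :
    (∫ a, f a * g a ∂μ) ^ 2 ≤ (∫ a, f a ^ 2 ∂μ) * ∫ a, g a ^ 2 ∂μ := by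
  have inner_toLp {u w : α → ℝ} (hu : MemLp u 2 μ) (hw : MemLp w 2 μ) :
      ⟪hu.toLp u, hw.toLp w⟫ = ∫ a, u a * w a ∂μ := by
    rw [L2.inner_def]
    refine integral_congr_ae ?_
    filter_upwards [hu.coeFn_toLp, hw.coeFn_toLp] with a hua hwa
    simp [hua, hwa, mul_comm]
  have cs := real_inner_mul_inner_self_le (hf.toLp f) (hg.toLp g)
  simpa only [inner_toLp, ← sq] using cs

lemma gaussianPDFReal_self_neg (v : ℝ≥0) (y : ℝ) :
    gaussianPDFReal v v (-y) = exp (-2 * y) * gaussianPDFReal v v y := by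
  rcases eq_or_ne v 0 with rfl | hv
  · simp
  have hv' : (v : ℝ) ≠ 0 := by exact_mod_cast hv
  simp only [gaussianPDFReal]
  rw [mul_left_comm, ← exp_add]
  congr 2
  field_simp
  ring

lemma integral_exp_neg_two_mul_gaussianReal_self (v : ℝ≥0) (h : ℝ → ℝ) :
    ∫ y, exp (-2 * y) * h y ∂gaussianReal v v = ∫ y, h (-y) ∂gaussianReal v v := by
  rcases eq_or_ne v 0 with rfl | hv
  · simp [gaussianReal_zero_var]
  simp only [integral_gaussianReal_eq_integral_smul hv, smul_eq_mul]
  rw [← integral_neg_eq_self (fun y => gaussianPDFReal v v y * h (-y))]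
  simp only [gaussianPDFReal_self_neg, neg_neg, mul_assoc, mul_left_comm]

lemma integral_mul_one_sub_tanh_gaussianReal_self (v : ℝ≥0) :
    ∫ y, y * (1 - tanh y) ∂gaussianReal v v = 0 := by
  set g : ℝ → ℝ := fun y => y * (1 - tanh y)
  have hg : ∀ y, g y = exp (-2 * y) * -g (-y) := by
    intro y
    simp only [g, tanh_neg, one_sub_tanh_eq_exp_mul_one_add_tanh y]
    ring
  have hodd : ∫ y, g y ∂gaussianReal v v = -∫ y, g y ∂gaussianReal v v := by
    calc ∫ y, g y ∂gaussianReal v v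
        = ∫ y, exp (-2 * y) * -g (-y) ∂gaussianReal v v := by simp_rw [← hg]
      _ = ∫ y, -g y ∂gaussianReal v v := by
        simpa using integral_exp_neg_two_mul_gaussianReal_self v (fun y => -g (-y))
      _ = -∫ y, g y ∂gaussianReal v v := integral_neg _
  linarith

lemma integral_mul_tanh_gaussianReal_self (v : ℝ≥0) :
    ∫ y, y * tanh y ∂gaussianReal v v = v := by
  have hid : Integrable (fun y => y) (gaussianReal v v) :=
    (memLp_id_gaussianReal 1).integrable le_rfl
  have hprod : Integrable (fun y => y * tanh y) (gaussianReal v v) :=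
    (memLp_id_gaussianReal' 2 (by simp)).integrable_mul (memLp_tanh _ 2)
  have h := integral_mul_one_sub_tanh_gaussianReal_self v
  simp only [mul_sub, mul_one] at h
  rw [integral_sub hid hprod, integral_id_gaussianReal] at h
  linarith

lemma integral_sq_gaussianReal_self (v : ℝ≥0) :
    ∫ y, y ^ 2 ∂gaussianReal v v = v + v ^ 2 := by
  have h := variance_eq_sub (memLp_id_gaussianReal (μ := (v : ℝ)) (v := v) 2)
  simp only [variance_id_gaussianReal, id, integral_id_gaussianReal, Pi.pow_apply] at h
  linarith

lemma div_one_add_le_integral_tanh_sq_gaussianReal_self (v : ℝ≥0) :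
    v / (1 + v) ≤ ∫ y, tanh y ^ 2 ∂gaussianReal v v := by
  have cs := sq_integral_mul_le_integral_sq_mul_integral_sq
    (memLp_id_gaussianReal' (μ := (v : ℝ)) (v := v) 2 (by simp)) (memLp_tanh _ 2)
  simp only [id, integral_mul_tanh_gaussianReal_self, integral_sq_gaussianReal_self] at cs
  rw [div_le_iff₀ (by positivity)]
  rcases eq_or_ne v 0 with rfl | hv
  · simp
  · have hv' : (0 : ℝ) < v := NNReal.coe_pos.2 (pos_iff_ne_zero.2 hv)
    nlinarith

lemma integral_inv_cosh_sq_gaussianReal_self_le (v : ℝ≥0) :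
    ∫ y, (cosh y)⁻¹ ^ 2 ∂gaussianReal v v ≤ 1 / (1 + v) := by
  simp_rw [inv_cosh_sq_eq_one_sub_tanh_sq]
  rw [integral_sub (integrable_const 1) ((memLp_tanh _ 2).integrable_sq), integral_const,
    probReal_univ, smul_eq_mul, mul_one]
  have h := div_one_add_le_integral_tanh_sq_gaussianReal_self v
  have : 1 - (v : ℝ) / (1 + v) = 1 / (1 + v) := by field_simp; ring
  linarith

lemma gaussianReal_map_sq_add_mul (σ : ℝ) :
    (gaussianReal 0 1).map (fun z => σ ^ 2 + σ * z) =
      gaussianReal (σ ^ 2) ⟨σ ^ 2, sq_nonneg σ⟩ := by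
  have : (fun z => σ ^ 2 + σ * z) = (σ ^ 2 + ·) ∘ (σ * ·) := rfl
  rw [this, ← Measure.map_map (by fun_prop) (by fun_prop), gaussianReal_map_const_mul,
    gaussianReal_map_const_add]
  congr 1
  · simp
  · exact mul_one _

theorem stmt_7_general (σ : ℝ) :
    ∫ z, ((Real.cosh (σ ^ 2 + σ * z))⁻¹) ^ 2 ∂(gaussianReal 0 1) ≤ 1 / (1 + σ ^ 2) := by
  have hf : Measurable fun y => (cosh y)⁻¹ ^ 2 := by fun_prop
  rw [← integral_map (by fun_prop) hf.aestronglyMeasurable, gaussianReal_map_sq_add_mul]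
  exact integral_inv_cosh_sq_gaussianReal_self_le ⟨σ ^ 2, sq_nonneg σ⟩

theorem stmt_7 (σ : ℝ) (hσ : 0 < σ) :
    ∫ z, ((Real.cosh (σ ^ 2 + σ * z))⁻¹) ^ 2 ∂(gaussianReal 0 1) ≤ 1 / (1 + σ ^ 2) :=
  stmt_7_general σ
end

section
/- For every fixed $\sigma \geq 0$, the function $h \mapsto \mathbb{E}[\operatorname{sech}^2(h + \sigma Z)]$ is strictly decreasing on $[0, \infty)$, where $Z$ is a standard Gaussian. -/
/-!
Differentiating under the integral, the derivative at `h` is `-𝔼[g(h + σZ)]` with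
`g = -(sech²)' = 2 sinh / cosh³`, which is odd, bounded and positive on `(0, ∞)`. As
`h + σZ ∼ N(h, σ²)` and `N(-h, σ²)` is its reflection, oddness of `g` gives
`2 𝔼[g(h + σZ)] = ∫ g(t) (p_h(t) - p_{-h}(t)) dt`, where `p_m` is the density of `N(m, σ²)`. For
`h > 0` both factors have the sign of `t`, so the integral is positive.
-/
open MeasureTheory ProbabilityTheory
open scoped NNReal

namespace ProbabilityTheory

lemma gaussianPDFReal_neg_mean_lt {x t : ℝ} {v : ℝ≥0} (hv : v ≠ 0) (hxt : 0 < x * t) :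
    gaussianPDFReal (-x) v t < gaussianPDFReal x v t := by
  have hv_pos : (0 : ℝ) < v := by positivity
  rw [gaussianPDFReal, gaussianPDFReal]
  refine mul_lt_mul_of_pos_left (Real.exp_lt_exp.2 ?_) (by positivity)
  rw [div_lt_div_iff_of_pos_right (by positivity)]
  nlinarith

lemma integral_gaussianReal_pos_of_odd {g : ℝ → ℝ} {C : ℝ} (hg : Measurable g)
    (hgC : ∀ t, ‖g t‖ ≤ C) (hg_odd : ∀ t, g (-t) = -g t) (hg_pos : ∀ t, 0 < t → 0 < g t)
    {x : ℝ} (hx : 0 < x) (v : ℝ≥0) : 0 < ∫ t, g t ∂gaussianReal x v := by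
  by_cases hv : v = 0
  · simpa [hv, gaussianReal_zero_var] using hg_pos x hx
  set p := gaussianPDFReal x v
  set q := gaussianPDFReal (-x) v
  have hg_int {m : ℝ} : Integrable (fun t => gaussianPDFReal m v t * g t) :=
    (integrable_gaussianPDFReal m v).mul_bdd hg.aestronglyMeasurable (ae_of_all _ hgC)
  have hreflect : ∫ t, g t ∂gaussianReal (-x) v = -∫ t, g t ∂gaussianReal x v := by
    rw [← gaussianReal_map_neg, integral_map (by fun_prop) hg.aestronglyMeasurable, ← integral_neg]
    simp only [hg_odd]
  have hsym : 2 * ∫ t, g t ∂gaussianReal x v = ∫ t, (p t - q t) * g t := by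
    calc 2 * ∫ t, g t ∂gaussianReal x v
        = ∫ t, g t ∂gaussianReal x v - ∫ t, g t ∂gaussianReal (-x) v := by rw [hreflect]; ring
      _ = (∫ t, p t * g t) - ∫ t, q t * g t := by
        simp only [integral_gaussianReal_eq_integral_smul hv, smul_eq_mul, p, q]
      _ = ∫ t, (p t - q t) * g t := by rw [← integral_sub hg_int hg_int]; simp only [sub_mul, p, q]
  have hsign (t : ℝ) (ht : 0 < t) : 0 < (p t - q t) * g t :=
    mul_pos (sub_pos.2 (gaussianPDFReal_neg_mean_lt hv (mul_pos hx ht))) (hg_pos t ht)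
  have hnonneg : 0 ≤ fun t => (p t - q t) * g t := by
    intro t
    rcases lt_trichotomy t 0 with ht | rfl | ht
    · have hqp : p t < q t := by
        simpa [p, q] using gaussianPDFReal_neg_mean_lt (x := -x) hv (by nlinarith)
      have hg_neg : g t < 0 := by linarith [hg_odd t, hg_pos (-t) (neg_pos.2 ht)]
      exact (mul_pos_of_neg_of_neg (sub_neg.2 hqp) hg_neg).le
    · have h0 := hg_odd 0
      rw [neg_zero] at h0
      simp [show g 0 = 0 by linarith]
    · exact (hsign t ht).le
  have hpos : 0 < ∫ t, (p t - q t) * g t := by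
    refine (integral_pos_iff_support_of_nonneg hnonneg ?_).2 ?_
    · simp only [sub_mul]; exact hg_int.sub hg_int
    · calc (0 : ENNReal) < volume (Set.Ioi (0 : ℝ)) := by simp [Real.volume_Ioi]
        _ ≤ _ := measure_mono fun t ht => (hsign t ht).ne'
  linarith

end ProbabilityTheory

lemma hasDerivAt_integral_comp_add {α : Type*} [MeasurableSpace α] {μ : Measure α}
    [IsFiniteMeasure μ] {f f' : ℝ → ℝ} {C C' : ℝ} (hf : ∀ t, HasDerivAt f (f' t) t)
    (hf' : Measurable f') (hfC : ∀ t, ‖f t‖ ≤ C) (hf'C : ∀ t, ‖f' t‖ ≤ C')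
    {Y : α → ℝ} (hY : Measurable Y) (x : ℝ) :
    HasDerivAt (fun h => ∫ a, f (h + Y a) ∂μ) (∫ a, f' (x + Y a) ∂μ) x := by
  have hf_meas : Measurable f :=
    (continuous_iff_continuousAt.2 fun t => (hf t).continuousAt).measurable
  have hF_meas (h : ℝ) : AEStronglyMeasurable (fun a => f (h + Y a)) μ :=
    (hf_meas.comp (measurable_const.add hY)).aestronglyMeasurable
  exact (hasDerivAt_integral_of_dominated_loc_of_deriv_le (F' := fun h a => f' (h + Y a))
    (bound := fun _ => C') Filter.univ_mem (.of_forall hF_meas)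
    (.of_bound (hF_meas x) C (ae_of_all _ fun _ => hfC _))
    (hf'.comp (measurable_const.add hY)).aestronglyMeasurable
    (ae_of_all _ fun _ _ _ => hf'C _) (integrable_const C')
    (ae_of_all _ fun a h _ => (hf _).comp_add_const h (Y a))).2

namespace Real

lemma hasDerivAt_inv_cosh_sq (t : ℝ) :
    HasDerivAt (fun t => (cosh t)⁻¹ ^ 2) (-(2 * sinh t / cosh t ^ 3)) t := by
  refine (((hasDerivAt_cosh t).inv (cosh_pos t).ne').fun_pow 2).congr_deriv ?_
  have := (cosh_pos t).ne'
  norm_num [Pi.inv_apply]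
  field_simp

lemma norm_inv_cosh_sq_le_one (t : ℝ) : ‖(cosh t)⁻¹ ^ 2‖ ≤ 1 := by
  rw [norm_pow, norm_inv, norm_of_nonneg (cosh_pos t).le]
  exact pow_le_one₀ (by positivity) (inv_le_one_of_one_le₀ (one_le_cosh t))

lemma norm_two_mul_sinh_div_cosh_pow_three_le (t : ℝ) : ‖2 * sinh t / cosh t ^ 3‖ ≤ 2 := by
  have hsinh : |sinh t| ≤ cosh t := by
    rw [abs_sinh, ← cosh_abs]
    exact (sinh_lt_cosh _).le
  have hcosh : cosh t ≤ cosh t ^ 3 := le_self_pow₀ (one_le_cosh t) (by norm_num)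
  rw [norm_div, norm_mul, norm_pow, norm_of_nonneg (cosh_pos t).le, norm_ofNat, norm_eq_abs,
    div_le_iff₀ (by positivity)]
  linarith

end Real

theorem stmt_9_general (σ : ℝ) :
    StrictAntiOn
      (fun h : ℝ => ∫ z, ((Real.cosh (h + σ * z))⁻¹) ^ 2 ∂(gaussianReal 0 1))
      (Set.Ici (0 : ℝ)) := by
  set g : ℝ → ℝ := fun t => 2 * Real.sinh t / Real.cosh t ^ 3
  have hderiv (x : ℝ) : HasDerivAt (fun h => ∫ z, (Real.cosh (h + σ * z))⁻¹ ^ 2 ∂gaussianReal 0 1)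
      (-∫ z, g (x + σ * z) ∂gaussianReal 0 1) x := by
    rw [← integral_neg]
    exact hasDerivAt_integral_comp_add Real.hasDerivAt_inv_cosh_sq (by fun_prop)
      Real.norm_inv_cosh_sq_le_one
      (fun t => (norm_neg _).trans_le (Real.norm_two_mul_sinh_div_cosh_pow_three_le t))
      (by fun_prop) x
  refine strictAntiOn_of_deriv_neg (convex_Ici 0)
    (fun x _ => (hderiv x).continuousAt.continuousWithinAt) fun x hx => ?_
  rw [interior_Ici] at hx
  have hpush : ∫ z, g (x + σ * z) ∂gaussianReal 0 1 = ∫ t, g t ∂gaussianReal (σ * 0 + x) _ :=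
    (gaussianReal_const_add (gaussianReal_const_mul HasLaw.id σ) x).integral_comp (f := g)
      (by fun_prop)
  rw [(hderiv x).deriv, neg_neg_iff_pos, hpush]
  exact integral_gaussianReal_pos_of_odd (by fun_prop)
    Real.norm_two_mul_sinh_div_cosh_pow_three_le (fun t => by simp [neg_div])
    (fun t ht => div_pos (mul_pos two_pos (Real.sinh_pos_iff.2 ht)) (pow_pos (Real.cosh_pos t) 3))
    (by simpa using hx) _

theorem stmt_9 (σ : ℝ) (hσ : 0 ≤ σ) :
    StrictAntiOn
      (fun h : ℝ => ∫ z, ((Real.cosh (h + σ * z))⁻¹) ^ 2 ∂(gaussianReal 0 1))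
      (Set.Ici (0 : ℝ)) :=
  stmt_9_general σ
end

section
/- Let $\beta > 0$, $h > 0$, and let $q \in (0,1)$ satisfy $q = \mathbb{E}[\tanh^2(\beta\sqrt{q}Z + h)]$ for $Z$ standard Gaussian. If $\beta^2(1-q) > 1$, then $h < \beta^2 q$. -/
/-!
Put `s = β²q` and suppose `s ≤ h`. Rescaling the fixed-point equation gives `q = E tanh² X` with
`X ∼ N(h, s)`. As `tanh²` increases with `|x|` and the Gaussian density is symmetric and unimodal,
this expectation can only decrease when the mean moves from `h` down to `s ≥ 0`.

For `X ∼ N(s, s)` the densities `p±` of `N(±s, s)` satisfy `tanh x = (p₊ - p₋) / (p₊ + p₋)`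
(`tanh X` is the posterior mean of a fair sign `ε` observed as `X = s ε + √s Z`). Symmetrising,
this gives `E[X tanh X] = s`, and expanding `E (tanh X - X / (1 + s))² ≥ 0` with `E X² = s + s²`
yields `E tanh² X ≥ s / (1 + s)`. Hence `q ≥ s / (1 + s)`, i.e. `β²(1 - q) ≤ 1`.
-/

open MeasureTheory ProbabilityTheory Real
open scoped NNReal

namespace Real

@[fun_prop]
lemma continuous_tanh : Continuous tanh := by
  simp only [funext tanh_eq_sinh_div_cosh]
  exact continuous_sinh.div continuous_cosh fun x => (cosh_pos x).ne'

lemma tanh_sq_eq_one_sub_inv_cosh_sq (x : ℝ) : tanh x ^ 2 = 1 - (cosh x ^ 2)⁻¹ := by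
  have := cosh_sq_sub_sinh_sq x
  rw [tanh_eq_sinh_div_cosh]
  field_simp
  linarith

lemma tanh_sq_le_tanh_sq {x y : ℝ} (h : |x| ≤ |y|) : tanh x ^ 2 ≤ tanh y ^ 2 := by
  rw [tanh_sq_eq_one_sub_inv_cosh_sq, tanh_sq_eq_one_sub_inv_cosh_sq]
  have := cosh_le_cosh.2 h
  have := cosh_pos x
  gcongr

end Real

namespace ProbabilityTheory

lemma integrable_gaussianReal_iff {f : ℝ → ℝ} {m : ℝ} {v : ℝ≥0} (hv : v ≠ 0) :
    Integrable f (gaussianReal m v) ↔ Integrable fun x => gaussianPDFReal m v x * f x := by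
  rw [gaussianReal_of_var_ne_zero _ hv, integrable_withDensity_iff_integrable_smul'
    (measurable_gaussianPDF _ _) (ae_of_all _ fun _ => gaussianPDF_lt_top)]
  simp

lemma gaussianPDFReal_le_of_sq_le {m m' x : ℝ} (v : ℝ≥0) (h : (x - m) ^ 2 ≤ (x - m') ^ 2) :
    gaussianPDFReal m' v x ≤ gaussianPDFReal m v x := by
  simp only [gaussianPDFReal]
  gcongr

lemma gaussianPDFReal_reflect (m m' : ℝ) (v : ℝ≥0) (x : ℝ) :
    gaussianPDFReal m v (m + m' - x) = gaussianPDFReal m' v x := by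
  simp only [gaussianPDFReal]
  ring_nf

lemma integral_gaussianReal_le_of_abs_mono {f : ℝ → ℝ} (hf : ∀ x y, |x| ≤ |y| → f x ≤ f y)
    {a b : ℝ} {v : ℝ≥0} (hb : 0 ≤ b) (hab : b ≤ a) (hfa : Integrable f (gaussianReal a v))
    (hfb : Integrable f (gaussianReal b v)) :
    ∫ x, f x ∂gaussianReal b v ≤ ∫ x, f x ∂gaussianReal a v := by
  rcases eq_or_ne v 0 with rfl | hv
  · simpa [gaussianReal_zero_var] using
      hf b a (by rwa [abs_of_nonneg hb, abs_of_nonneg (hb.trans hab)])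
  rw [integrable_gaussianReal_iff hv] at hfa hfb
  simp only [integral_gaussianReal_eq_integral_smul hv, smul_eq_mul]
  rw [← sub_nonneg, ← integral_sub hfa hfb]
  set F := fun x => gaussianPDFReal a v x * f x - gaussianPDFReal b v x * f x
  have hF : Integrable F := hfa.sub hfb
  have hreflect : ∫ x, F (a + b - x) = ∫ x, F x := integral_sub_left_eq_self F _ _
  have hpair : ∀ x, 0 ≤ F x + F (a + b - x) := by
    intro x
    have hF_pair : F x + F (a + b - x)
        = (gaussianPDFReal a v x - gaussianPDFReal b v x) * (f x - f (a + b - x)) := by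
      simp only [F, gaussianPDFReal_reflect]
      rw [add_comm a b, gaussianPDFReal_reflect]
      ring
    rw [hF_pair]
    -- both factors have the sign of `2 x - (a + b)`
    rcases le_total (a + b) (2 * x) with hx | hx
    · exact mul_nonneg (sub_nonneg.2 (gaussianPDFReal_le_of_sq_le v (by nlinarith)))
        (sub_nonneg.2 (hf _ _ (abs_le_abs (by linarith) (by linarith))))
    · exact mul_nonneg_of_nonpos_of_nonpos
        (sub_nonpos.2 (gaussianPDFReal_le_of_sq_le v (by nlinarith)))
        (sub_nonpos.2 (hf _ _ (abs_le_abs (by linarith) (by linarith))))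
  have : 0 ≤ ∫ x, (F x + F (a + b - x)) := integral_nonneg hpair
  rwa [integral_add hF (hF.comp_sub_left _), hreflect, ← two_mul,
    mul_nonneg_iff_of_pos_left two_pos] at this

lemma integral_comp_neg_gaussianReal (f : ℝ → ℝ) (m : ℝ) (v : ℝ≥0) :
    ∫ x, f (-x) ∂gaussianReal m v = ∫ x, f x ∂gaussianReal (-m) v := by
  rw [← gaussianReal_map_neg]
  exact ((Homeomorph.neg ℝ).measurableEmbedding.integral_map f).symm

lemma integral_comp_mul_add_gaussianReal {f : ℝ → ℝ} (hf : Measurable f) (c y m : ℝ) (v : ℝ≥0) :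
    ∫ x, f (c * x + y) ∂gaussianReal m v
      = ∫ x, f x ∂gaussianReal (c * m + y) (.mk (c ^ 2) (sq_nonneg c) * v) := by
  rw [← gaussianReal_map_add_const, ← gaussianReal_map_const_mul,
    Measure.map_map (by fun_prop) (by fun_prop),
    integral_map (by fun_prop) hf.aestronglyMeasurable]
  rfl

lemma integral_sq_gaussianReal (m : ℝ) (v : ℝ≥0) : ∫ x, x ^ 2 ∂gaussianReal m v = v + m ^ 2 := by
  have := variance_eq_sub (memLp_id_gaussianReal (μ := m) (v := v) 2)
  simp only [variance_id_gaussianReal] at this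
  simp [this]

lemma tanh_mul_add_gaussianPDFReal (s : ℝ≥0) (x : ℝ) :
    tanh x * (gaussianPDFReal s s x + gaussianPDFReal (-s) s x)
      = gaussianPDFReal s s x - gaussianPDFReal (-s) s x := by
  rcases eq_or_ne s 0 with rfl | hs
  · simp
  have hs' : (s : ℝ) ≠ 0 := by exact_mod_cast hs
  have hratio :
      rexp (-(x - s) ^ 2 / (2 * s)) = rexp (-(x - -s) ^ 2 / (2 * s)) * (rexp x * rexp x) := by
    rw [← exp_add, ← exp_add]
    congr 1
    field_simp
    ring
  simp only [gaussianPDFReal, hratio, tanh_eq, exp_neg]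
  field_simp

lemma integrable_mul_tanh_gaussianReal (m : ℝ) (v : ℝ≥0) :
    Integrable (fun x => x * tanh x) (gaussianReal m v) := by
  refine (memLp_id_gaussianReal 1).integrable le_rfl |>.mono
    (by fun_prop) (ae_of_all _ fun x => ?_)
  simp only [norm_mul, id, norm_eq_abs]
  exact mul_le_of_le_one_right (abs_nonneg x) (abs_tanh_lt_one x).le

lemma integral_mul_tanh_gaussianReal (s : ℝ≥0) : ∫ x, x * tanh x ∂gaussianReal s s = s := by
  rcases eq_or_ne s 0 with rfl | hs
  · simp [gaussianReal_zero_var]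
  have hint (m : ℝ) : Integrable fun x => gaussianPDFReal m s x * x :=
    (integrable_gaussianReal_iff hs).1 ((memLp_id_gaussianReal 1).integrable le_rfl)
  have hint_tanh (m : ℝ) : Integrable fun x => gaussianPDFReal m s x * (x * tanh x) :=
    (integrable_gaussianReal_iff hs).1 (integrable_mul_tanh_gaussianReal m s)
  have heven : ∫ x, x * tanh x ∂gaussianReal (-s) s = ∫ x, x * tanh x ∂gaussianReal s s := by
    simp [← integral_comp_neg_gaussianReal, tanh_neg]
  have hsum : ∫ x, x * tanh x ∂gaussianReal s s + ∫ x, x * tanh x ∂gaussianReal (-s) s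
      = ∫ x, x ∂gaussianReal s s - ∫ x, x ∂gaussianReal (-s) s := by
    simp only [integral_gaussianReal_eq_integral_smul hs, smul_eq_mul]
    rw [← integral_add (hint_tanh _) (hint_tanh _), ← integral_sub (hint _) (hint _)]
    congr 1 with x
    linear_combination x * tanh_mul_add_gaussianPDFReal s x
  rw [heven, integral_id_gaussianReal, integral_id_gaussianReal] at hsum
  linarith

lemma integrable_tanh_sq_gaussianReal (m : ℝ) (v : ℝ≥0) :
    Integrable (fun x => tanh x ^ 2) (gaussianReal m v) :=
  .of_bound (by fun_prop) 1 (ae_of_all _ fun x => by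
    simpa [abs_pow] using (tanh_sq_lt_one x).le)

lemma div_one_add_le_integral_tanh_sq (s : ℝ≥0) :
    s / (1 + s) ≤ ∫ x, tanh x ^ 2 ∂gaussianReal s s := by
  set l : ℝ := 1 / (1 + s)
  have hsq : Integrable (fun x : ℝ => x ^ 2) (gaussianReal s s) :=
    (memLp_id_gaussianReal 2).integrable_sq
  have hexpand : ∫ x, (tanh x - l * x) ^ 2 ∂gaussianReal s s
      = ∫ x, tanh x ^ 2 ∂gaussianReal s s - 2 * l * s + l ^ 2 * (s + s ^ 2) := by
    have : ∀ x, (tanh x - l * x) ^ 2 = tanh x ^ 2 - 2 * l * (x * tanh x) + l ^ 2 * x ^ 2 :=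
      fun x => by ring
    simp only [this]
    rw [integral_add (f := fun x => tanh x ^ 2 - 2 * l * (x * tanh x))
        ((integrable_tanh_sq_gaussianReal _ _).sub
        ((integrable_mul_tanh_gaussianReal _ _).const_mul _)) (hsq.const_mul _),
      integral_sub (integrable_tanh_sq_gaussianReal _ _)
        ((integrable_mul_tanh_gaussianReal _ _).const_mul _),
      integral_const_mul, integral_const_mul, integral_mul_tanh_gaussianReal,
      integral_sq_gaussianReal]
  have hl : (s : ℝ) / (1 + s) = 2 * l * s - l ^ 2 * (s + s ^ 2) := by
    have : (1 + s : ℝ) ≠ 0 := by positivity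
    simp only [l]
    field_simp
    ring
  have : 0 ≤ ∫ x, (tanh x - l * x) ^ 2 ∂gaussianReal s s := integral_nonneg fun x => sq_nonneg _
  linarith

end ProbabilityTheory

theorem stmt_12_general (β h q : ℝ) (hq : q ∈ Set.Ioo (0 : ℝ) 1)
    (hfix : q = ∫ z, Real.tanh (β * Real.sqrt q * z + h) ^ 2 ∂(gaussianReal 0 1))
    (hB : 1 < β ^ 2 * (1 - q)) :
    h < β ^ 2 * q := by
  obtain ⟨hq0, -⟩ := hq
  by_contra! hle
  set s : ℝ≥0 := ⟨β ^ 2 * q, by positivity⟩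
  have hq_eq : q = ∫ x, tanh x ^ 2 ∂gaussianReal h s := by
    rw [hfix, integral_comp_mul_add_gaussianReal (f := fun x => tanh x ^ 2) (by fun_prop)]
    congr 2
    · ring
    · ext
      simp [s, mul_pow, sq_sqrt hq0.le]
      rfl
  have hq_ge : β ^ 2 * q / (1 + β ^ 2 * q) ≤ q := calc
    _ ≤ ∫ x, tanh x ^ 2 ∂gaussianReal s s := div_one_add_le_integral_tanh_sq s
    _ ≤ ∫ x, tanh x ^ 2 ∂gaussianReal h s :=
      integral_gaussianReal_le_of_abs_mono (fun _ _ => tanh_sq_le_tanh_sq) s.2 hle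
        (integrable_tanh_sq_gaussianReal _ _) (integrable_tanh_sq_gaussianReal _ _)
    _ = q := hq_eq.symm
  rw [div_le_iff₀ (by positivity)] at hq_ge
  linarith [mul_lt_mul_of_pos_left hB hq0]

theorem stmt_12 (β h q : ℝ) (hβ : 0 < β) (hh : 0 < h) (hq : q ∈ Set.Ioo (0 : ℝ) 1)
    (hfix : q = ∫ z, Real.tanh (β * Real.sqrt q * z + h) ^ 2 ∂(gaussianReal 0 1))
    (hB : 1 < β ^ 2 * (1 - q)) :
    h < β ^ 2 * q :=
  stmt_12_general β h q hq hfix hB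
end

section
/- Let $f : [q, 1] \to \mathbb{R}$ be continuously differentiable with $f(q) = 0$ and $f'(q) < 0$, and suppose that whenever $f(t_0) = 0$ for some $t_0 \in (q, 1]$ one has $f'(t_0) \leq \beta^2(1 - t_0) - 1$, where $\beta^2(1-q) \leq 1$ and $\beta > 0$. Then $f(t) \leq 0$ for all $t \in [q,1]$. -/
open Topology Filter

theorem stmt_16 (q β : ℝ) (hq : q ∈ Set.Ico (0 : ℝ) 1) (hβ : 0 < β)
    (hB : β ^ 2 * (1 - q) ≤ 1)
    (f f' : ℝ → ℝ)
    (hderiv : ∀ t ∈ Set.Icc q 1, HasDerivWithinAt f (f' t) (Set.Icc q 1) t)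
    (hcont : ContinuousOn f' (Set.Icc q 1))
    (hfq : f q = 0) (hf'q : f' q < 0)
    (hzero : ∀ t₀ ∈ Set.Ioc q 1, f t₀ = 0 → f' t₀ ≤ β ^ 2 * (1 - t₀) - 1) :
    ∀ t ∈ Set.Icc q 1, f t ≤ 0 := by
  intro t ht
  by_contra hpos
  push_neg at hpos
  have hfc : ContinuousOn f (Set.Icc q 1) := fun x hx =>
    (hderiv x hx).continuousWithinAt
  have hqt : q ≤ t := ht.1
  -- set of zeros in [q, t]
  set S : Set ℝ := {s | s ∈ Set.Icc q t ∧ f s = 0} with hS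
  have hSne : S.Nonempty := ⟨q, ⟨le_refl q, hqt⟩, hfq⟩
  have hSbdd : BddAbove S := ⟨t, fun s hs => hs.1.2⟩
  have hsubIcc : Set.Icc q t ⊆ Set.Icc q 1 := Set.Icc_subset_Icc le_rfl ht.2
  have hSclosed : IsClosed S := by
    have : S = Set.Icc q t ∩ f ⁻¹' {0} := by
      ext s; simp [hS, Set.mem_inter_iff, and_comm]
    rw [this]
    exact (hfc.mono hsubIcc).preimage_isClosed_of_isClosed isClosed_Icc isClosed_singleton
  set a := sSup S with ha
  have haS : a ∈ S := hSclosed.csSup_mem hSne hSbdd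
  have haq : q ≤ a := haS.1.1
  have hat : a ≤ t := haS.1.2
  have hfa : f a = 0 := haS.2
  have hant : a < t := by
    rcases lt_or_eq_of_le hat with h | h
    · exact h
    · exfalso; rw [h] at hfa; linarith
  have ha1 : a ∈ Set.Icc q 1 := ⟨haq, hat.trans ht.2⟩
  -- f > 0 on (a, t]
  have hposOn : ∀ s ∈ Set.Ioc a t, 0 < f s := by
    intro s hs
    rcases lt_trichotomy (f s) 0 with h | h | h
    · -- IVT gives a zero in (s, t), contradicting sup
      have hst : s ≤ t := hs.2
      have hcs : ContinuousOn f (Set.Icc s t) :=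
        hfc.mono (Set.Icc_subset_Icc (haq.trans hs.1.le) ht.2)
      have : (0 : ℝ) ∈ Set.Icc (f s) (f t) := ⟨h.le, hpos.le⟩
      obtain ⟨c, hc, hfc0⟩ := intermediate_value_Icc hst hcs this
      have hcS : c ∈ S := ⟨⟨(haq.trans hs.1.le).trans hc.1, hc.2⟩, hfc0⟩
      have : c ≤ a := le_csSup hSbdd hcS
      have : a < c := lt_of_lt_of_le hs.1 hc.1
      linarith
    · exfalso
      have hsS : s ∈ S := ⟨⟨haq.trans hs.1.le, hs.2⟩, h⟩
      have : s ≤ a := le_csSup hSbdd hsS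
      linarith [hs.1]
    · exact h
  -- derivative at a is ≥ 0 via slopes
  have hda : HasDerivWithinAt f (f' a) (Set.Ioc a t) a :=
    (hderiv a ha1).mono (fun x hx => ⟨haq.trans hx.1.le, hx.2.trans ht.2⟩)
  have hslope : Filter.Tendsto (slope f a) (𝓝[Set.Ioc a t \ {a}] a) (𝓝 (f' a)) :=
    hasDerivWithinAt_iff_tendsto_slope.mp hda
  have hdiff : Set.Ioc a t \ {a} = Set.Ioc a t := by
    ext x
    simp only [Set.mem_diff, Set.mem_singleton_iff, Set.mem_Ioc, and_iff_left_iff_imp]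
    rintro ⟨hx, -⟩; exact ne_of_gt hx
  rw [hdiff] at hslope
  haveI : Filter.NeBot (𝓝[Set.Ioc a t] a) := left_nhdsWithin_Ioc_neBot hant
  have hnn : 0 ≤ f' a := by
    refine ge_of_tendsto hslope ?_
    filter_upwards [self_mem_nhdsWithin] with s hs
    have := hposOn s hs
    rw [slope_def_field]
    have hsa : 0 < s - a := sub_pos.mpr hs.1
    rw [hfa]
    exact div_nonneg (by linarith) hsa.le
  rcases eq_or_lt_of_le haq with h | h
  · rw [← h] at hnn; linarith
  · have hle := hzero a ⟨h, hat.trans ht.2⟩ hfa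
    have hb2 : 0 < β ^ 2 := by positivity
    nlinarith
end
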